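/- Let Z and E be measurable spaces, let g : Z → E be measurable, and let μ₁, μ₂, μ₃ be probability measures on Z × ℝ. Let μᵢᵍ denote the pushforward of μᵢ under the map (z, y) ↦ (g(z), y), with E-marginals νᵢᵍ (the pushforward of the Z-marginal νᵢ under g). For measurable f : E → ℝ define R_{μᵢᵍ}(f) := ∫ |f(e) − y| dμᵢᵍ(e,y). Let H_f be a nonempty set of measurable functions E → ℝ, let F be a set of measurable functions E → ℝ that is closed under negation and contains e ↦ |f(e) − f'(e)| for all f, f' ∈ H_f, and define d_F(ν, ν') := sup_{φ ∈ F} (∫ φ dν − ∫ φ dν'). Assume all risks are finite, all relevant integrands are integrable, the suprema defining d_F(ν₁ᵍ, ν₂ᵍ) and d_F(ν₁ᵍ, ν₃ᵍ) are finite, and there exists f₂* ∈ H_f attaining min_{f∈H_f} R_{μ₂ᵍ}(f). Set λ' := inf_{f ∈ H_f} (R_{μ₂ᵍ}(f) + R_{μ₃ᵍ}(f)). Then for every f ∈ H_f, R_{μ₂ᵍ}(f) ≤ R_{μ₃ᵍ}(f) + 2·d_F(ν₁ᵍ, ν₂ᵍ) + d_F(ν₁ᵍ, ν₃ᵍ)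 + λ'. -/

import Mathlib

open MeasureTheory

/-- Generalization risk with absolute loss: `R_μ(f) = ∫ |f(e) - y| dμ(e,y)`. -/
noncomputable def risk {E : Type*} [MeasurableSpace E]
    (μ : Measure (E × ℝ)) (f : E → ℝ) : ℝ :=
  ∫ p, |f p.1 - p.2| ∂μ

/-- Discrepancy over a function class `F`:
`d_F(ν, ν') = sup_{φ ∈ F} (∫ φ dν - ∫ φ dν')`. -/
noncomputable def discrepancy {E : Type*} [MeasurableSpace E]
    (F : Set (E → ℝ)) (ν ν' : Measure E) : ℝ :=
  sSup ((fun φ => (∫ e, φ e ∂ν) - ∫ e, φ e ∂ν') '' F)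

/-- Theorem 2 (Induced CFR Bound) with absolute loss: given a fixed measurable
encoder `g : Z → E`, the catastrophic forgetting risk of a prediction head `f`
on the pushed-forward distribution `μ₂ᵍ` is bounded via the latent-space
discrepancies and the joint optimal risk `λ'`. -/
theorem induced_cfr_bound
    {Z E : Type*} [MeasurableSpace Z] [MeasurableSpace E]
    (g : Z → E) (hg : Measurable g)
    (μ₁ μ₂ μ₃ : Measure (Z × ℝ))
    [IsProbabilityMeasure μ₁] [IsProbabilityMeasure μ₂] [IsProbabilityMeasure μ₃]
    (μ₁g μ₂g μ₃g : Measure (E × ℝ))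
    (hμ₁g : μ₁g = μ₁.map (fun p => (g p.1, p.2)))
    (hμ₂g : μ₂g = μ₂.map (fun p => (g p.1, p.2)))
    (hμ₃g : μ₃g = μ₃.map (fun p => (g p.1, p.2)))
    (ν₁g ν₂g ν₃g : Measure E)
    (hν₁g : ν₁g = μ₁g.map Prod.fst) (hν₂g : ν₂g = μ₂g.map Prod.fst)
    (hν₃g : ν₃g = μ₃g.map Prod.fst)
    (Hf : Set (E → ℝ)) (hHf : Hf.Nonempty)
    (hHfmeas : ∀ f ∈ Hf, Measurable f)
    (F : Set (E → ℝ)) (hFmeas : ∀ φ ∈ F, Measurable φ)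
    (hFneg : ∀ φ ∈ F, (fun e => -(φ e)) ∈ F)
    (hFpair : ∀ f ∈ Hf, ∀ f' ∈ Hf, (fun e => |f e - f' e|) ∈ F)
    (hint₁ : ∀ f ∈ Hf, Integrable (fun p : E × ℝ => |f p.1 - p.2|) μ₁g)
    (hint₂ : ∀ f ∈ Hf, Integrable (fun p : E × ℝ => |f p.1 - p.2|) μ₂g)
    (hint₃ : ∀ f ∈ Hf, Integrable (fun p : E × ℝ => |f p.1 - p.2|) μ₃g)
    (hpint₁ : ∀ f ∈ Hf, ∀ f' ∈ Hf, Integrable (fun e => |f e - f' e|) ν₁g)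
    (hpint₂ : ∀ f ∈ Hf, ∀ f' ∈ Hf, Integrable (fun e => |f e - f' e|) ν₂g)
    (hpint₃ : ∀ f ∈ Hf, ∀ f' ∈ Hf, Integrable (fun e => |f e - f' e|) ν₃g)
    (hbdd₁₂ : BddAbove ((fun φ => (∫ e, φ e ∂ν₁g) - ∫ e, φ e ∂ν₂g) '' F))
    (hbdd₁₃ : BddAbove ((fun φ => (∫ e, φ e ∂ν₁g) - ∫ e, φ e ∂ν₃g) '' F))
    (f₂star : E → ℝ) (f₂star_mem : f₂star ∈ Hf)
    (f₂star_min : ∀ f ∈ Hf, risk μ₂g f₂star ≤ risk μ₂g f)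
    (lam' : ℝ) (hlam' : lam' = sInf ((fun f => risk μ₂g f + risk μ₃g f) '' Hf)) :
    ∀ f ∈ Hf, risk μ₂g f ≤ risk μ₃g f +
      2 * discrepancy F ν₁g ν₂g + discrepancy F ν₁g ν₃g + lam' := by
  intro f hf
  -- transfer marginal integrals
  have hmap : ∀ (μg : Measure (E × ℝ)) (νg : Measure E), νg = μg.map Prod.fst →
      ∀ f f' : E → ℝ, Measurable f → Measurable f' →
      ∫ e, |f e - f' e| ∂νg = ∫ p : E × ℝ, |f p.1 - f' p.1| ∂μg := by
    intro μg νg h f f' hfm hfm'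
    rw [h, integral_map (f := fun e => |f e - f' e|) measurable_fst.aemeasurable
      ((hfm.sub hfm').abs).aestronglyMeasurable]
  have hmapInt : ∀ (μg : Measure (E × ℝ)) (νg : Measure E), νg = μg.map Prod.fst →
      ∀ f f' : E → ℝ, Measurable f → Measurable f' →
      Integrable (fun e => |f e - f' e|) νg →
      Integrable (fun p : E × ℝ => |f p.1 - f' p.1|) μg := by
    intro μg νg h f f' hfm hfm' hI
    rw [h] at hI
    exact (integrable_map_measure ((hfm.sub hfm').abs).aestronglyMeasurable
      measurable_fst.aemeasurable).mp hI
  set d₁₂ := discrepancy F ν₁g ν₂g with hd₁₂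
  set d₁₃ := discrepancy F ν₁g ν₃g with hd₁₃
  -- nonnegativity of d₁₂
  have hd₁₂nonneg : 0 ≤ d₁₂ := by
    obtain ⟨f₀, hf₀⟩ := hHf
    have hφ : (fun e => |f₀ e - f₀ e|) ∈ F := hFpair f₀ hf₀ f₀ hf₀
    have : (0 : ℝ) ∈ ((fun φ => (∫ e, φ e ∂ν₁g) - ∫ e, φ e ∂ν₂g) '' F) := by
      refine ⟨_, hφ, ?_⟩
      simp
    exact le_csSup hbdd₁₂ this
  -- main bound for every f' ∈ Hf
  have key : ∀ f' ∈ Hf, risk μ₂g f - risk μ₃g f - d₁₂ - d₁₃ ≤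
      risk μ₂g f' + risk μ₃g f' := by
    intro f' hf'
    have hfm := hHfmeas f hf
    have hfm' := hHfmeas f' hf'
    have hI₂ := hmapInt μ₂g ν₂g hν₂g f f' hfm hfm' (hpint₂ f hf f' hf')
    have hI₃ := hmapInt μ₃g ν₃g hν₃g f f' hfm hfm' (hpint₃ f hf f' hf')
    -- Step A: risk μ₂g f ≤ risk μ₂g f' + ∫|f - f'| dν₂g
    have stepA : risk μ₂g f ≤ risk μ₂g f' + ∫ e, |f e - f' e| ∂ν₂g := by
      rw [hmap μ₂g ν₂g hν₂g f f' hfm hfm']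
      unfold risk
      rw [← integral_add (hint₂ f' hf') hI₂]
      refine integral_mono (hint₂ f hf) ((hint₂ f' hf').add hI₂) ?_
      intro p
      have : |f p.1 - p.2| ≤ |f' p.1 - p.2| + |f p.1 - f' p.1| := by
        have := abs_sub_abs_le_abs_sub (f p.1 - p.2) (f' p.1 - p.2)
        calc |f p.1 - p.2| = |(f' p.1 - p.2) + (f p.1 - f' p.1)| := by ring_nf
          _ ≤ |f' p.1 - p.2| + |f p.1 - f' p.1| := abs_add_le _ _
      simpa using this
    -- Step B: ∫|f-f'|dν₂g ≤ ∫|f-f'|dν₁g + d₁₂ (via negation closure)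
    have stepB : ∫ e, |f e - f' e| ∂ν₂g ≤ (∫ e, |f e - f' e| ∂ν₁g) + d₁₂ := by
      have hφ := hFpair f hf f' hf'
      have hnφ := hFneg _ hφ
      have hmem : ((∫ e, -(|f e - f' e|) ∂ν₁g) - ∫ e, -(|f e - f' e|) ∂ν₂g)
          ∈ ((fun φ => (∫ e, φ e ∂ν₁g) - ∫ e, φ e ∂ν₂g) '' F) :=
        ⟨_, hnφ, rfl⟩
      have hle := le_csSup hbdd₁₂ hmem
      rw [integral_neg, integral_neg] at hle
      rw [hd₁₂]; unfold discrepancy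
      linarith
    -- Step C: ∫|f-f'|dν₁g ≤ ∫|f-f'|dν₃g + d₁₃
    have stepC : ∫ e, |f e - f' e| ∂ν₁g ≤ (∫ e, |f e - f' e| ∂ν₃g) + d₁₃ := by
      have hφ := hFpair f hf f' hf'
      have hle := le_csSup hbdd₁₃
        (⟨_, hφ, rfl⟩ : ((∫ e, |f e - f' e| ∂ν₁g) - ∫ e, |f e - f' e| ∂ν₃g)
          ∈ ((fun φ => (∫ e, φ e ∂ν₁g) - ∫ e, φ e ∂ν₃g) '' F))
      rw [hd₁₃]; unfold discrepancy
      linarith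
    -- Step D: ∫|f-f'|dν₃g ≤ risk μ₃g f + risk μ₃g f'
    have stepD : ∫ e, |f e - f' e| ∂ν₃g ≤ risk μ₃g f + risk μ₃g f' := by
      rw [hmap μ₃g ν₃g hν₃g f f' hfm hfm']
      unfold risk
      rw [← integral_add (hint₃ f hf) (hint₃ f' hf')]
      refine integral_mono hI₃ ((hint₃ f hf).add (hint₃ f' hf')) ?_
      intro p
      have : |f p.1 - f' p.1| ≤ |f p.1 - p.2| + |f' p.1 - p.2| := by
        calc |f p.1 - f' p.1| = |(f p.1 - p.2) - (f' p.1 - p.2)| := by ring_nf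
          _ ≤ |f p.1 - p.2| + |f' p.1 - p.2| := abs_sub _ _
      simpa using this
    linarith
  -- lam' bounds
  have hlam : risk μ₂g f - risk μ₃g f - d₁₂ - d₁₃ ≤ lam' := by
    rw [hlam']
    refine le_csInf (hHf.image _) ?_
    rintro b ⟨f', hf', rfl⟩
    exact key f' hf'
  linarith
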